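/- Let D be a division ring with center F, n ≥ 1, and identify F* with scalar matrices in GL_n(D). Then Z(SL_n(D)) = { dI : d ∈ F*, dⁿ ∈ D' } is a torsion group if and only if Z(D') is a torsion group, where D' = [D*, D*]. -/

import Mathlib

universe u

/-- A subring of a division ring that is closed under inverses, i.e. a division subring. -/
def IsDivisionSubring {D : Type u} [DivisionRing D] (E : Subring D) : Prop :=
  ∀ x ∈ E, x⁻¹ ∈ E

/-- The division subring of `D` generated by a set `S`. -/
def divClosure (D : Type u) [DivisionRing D] (S : Set D) : Subring D :=
  sInf {E : Subring D | S ⊆ E ∧ IsDivisionSubring E}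

/-- A maximal subfield of a division ring `D`: a commutative division subring containing the
center which is maximal among commutative division subrings. -/
def IsMaximalSubfield (D : Type u) [DivisionRing D] (K : Subring D) : Prop :=
  IsDivisionSubring K ∧ (∀ x ∈ K, ∀ y ∈ K, x * y = y * x) ∧ Subring.center D ≤ K ∧
    ∀ K' : Subring D, IsDivisionSubring K' → (∀ x ∈ K', ∀ y ∈ K', x * y = y * x) →
      K ≤ K' → K' = K

/-- A division ring is centrally finite if it is a finite-dimensional vector space over its
center. -/
def IsCentrallyFinite (D : Type u) [DivisionRing D] : Prop :=
  Module.Finite (Subring.center D) D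

/-- A division ring `D` is strongly algebraic over its center `F` if it is algebraic over `F`
and it has a maximal subfield `K = F(S)` such that every `x ∈ D` fails to commute with only
finitely many elements of `S`. -/
def IsStronglyAlgebraic (D : Type u) [DivisionRing D] : Prop :=
  (∀ a : D, IsAlgebraic (Subring.center D) a) ∧
  ∃ (K : Subring D) (S : Set D), IsMaximalSubfield D K ∧ S ⊆ K ∧
    K = divClosure D ((Subring.center D : Set D) ∪ S) ∧
    ∀ x : D, {y ∈ S | x * y ≠ y * x}.Finite

/-- An embedding of a ring into some centrally finite division ring. -/
structure CFEmbedding (R : Type u) [Ring R] : Type (u + 1) where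
  L : Type u
  [instL : DivisionRing L]
  f : R →+* L
  inj : Function.Injective f
  cf : IsCentrallyFinite L

/-- A division ring is locally linear if every finite subset is contained in a division
subring that embeds in some centrally finite division ring. -/
def IsLocallyLinear (D : Type u) [DivisionRing D] : Prop :=
  ∀ S : Finset D, ∃ E : Subring D, (S : Set D) ⊆ E ∧ IsDivisionSubring E ∧
    Nonempty (CFEmbedding E)

/-- A subgroup is subnormal if there is a finite chain of successively normal subgroups
reaching the whole group. -/
def IsSubnormal {G : Type u} [Group G] (N : Subgroup G) : Prop :=
  ∃ (n : ℕ) (c : ℕ → Subgroup G), c 0 = N ∧ c n = ⊤ ∧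
    ∀ i < n, c i ≤ c (i + 1) ∧ ∀ x ∈ c (i + 1), ∀ h ∈ c i, x * h * x⁻¹ ∈ c i

/-- A division subring `E` of `D` is centrally finite if `E` is spanned over its own center by
finitely many elements. -/
def IsCentrallyFiniteSubring {D : Type u} [DivisionRing D] (E : Subring D) : Prop :=
  ∃ B : Finset D, (B : Set D) ⊆ E ∧ ∀ x ∈ E, ∃ c : D → D,
    (∀ b ∈ B, c b ∈ E ∧ ∀ y ∈ E, c b * y = y * c b) ∧ x = ∑ b ∈ B, c b * b

/-
If `z` lies in the centre of `D' = [D*, D*]`, then for every `x ∈ D*` it commutes with the commutator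
`x z x⁻¹ z⁻¹ ∈ D'`, hence with every conjugate `x z x⁻¹`; in a division ring this forces `z` to be
central (compare the conjugates by `d` and by `d + 1`). So `Z(D')` consists of central elements `z` with `zⁿ ∈ D'`, and
the scalar matrix `zI` has the same order as `z`. Conversely, for central `d` with `dⁿ ∈ D'`, the
element `dⁿ` lies in `Z(D')`, and `dI` has finite order iff `d` does iff `dⁿ` does.
-/

theorem Subring.mem_center_of_forall_commute_conj {D : Type*} [DivisionRing D] {z : D}
    (h : ∀ x : D, Commute z (x * z * x⁻¹)) : z ∈ Subring.center D := by
  rw [Subring.mem_center_iff]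
  intro d
  suffices Commute z d from this.eq.symm
  rcases eq_or_ne d 0 with rfl | hd
  · exact Commute.zero_right z
  rcases eq_or_ne (d + 1) 0 with hd1 | hd1
  · rw [eq_neg_of_add_eq_zero_left hd1]
    exact (Commute.one_right z).neg_right
  set w := d * z * d⁻¹
  set w' := (d + 1) * z * (d + 1)⁻¹
  have hw : w * d = d * z := by simp only [w, mul_assoc, inv_mul_cancel₀ hd, mul_one]
  have hw' : w' * (d + 1) = (d + 1) * z := by
    simp only [w', mul_assoc, inv_mul_cancel₀ hd1, mul_one]
  -- subtracting the two conjugation identities expresses `d` through elements commuting with `z`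
  have key : (w' - w) * d = z - w' := by
    rw [mul_add, mul_one, add_mul, one_mul] at hw'
    rw [sub_mul, hw]
    calc w' * d - d * z = w' * d + w' - (d * z + z) + (z - w') := by abel
      _ = z - w' := by rw [hw', sub_self, zero_add]
  rcases eq_or_ne w' w with heq | hne
  · have hz : z = w' := sub_eq_zero.mp (by rw [← key, heq, sub_self, zero_mul])
    have hzd1 : Commute z (d + 1) := (congrArg (· * (d + 1)) hz).trans hw'
    simpa using hzd1.sub_right (Commute.one_right z)
  · have hd_eq : d = (w' - w)⁻¹ * (z - w') := by
      rw [← key, ← mul_assoc, inv_mul_cancel₀ (sub_ne_zero.mpr hne), one_mul]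
    rw [hd_eq]
    exact ((h (d + 1)).sub_right (h d)).inv_right₀.mul_right
      ((Commute.refl z).sub_right (h (d + 1)))

open scoped commutatorElement in
theorem commute_conj_of_mem_center_commutator {G : Type*} [Group G]
    {z : commutator G} (hz : z ∈ Subgroup.center (commutator G)) (g : G) :
    Commute (z : G) (g * z * g⁻¹) := by
  have hc : ⁅g, (z : G)⁆ ∈ commutator G :=
    Subgroup.commutator_mem_commutator (Subgroup.mem_top g) (Subgroup.mem_top _)
  have hzc : Commute (z : G) ⁅g, (z : G)⁆ :=
    (congrArg Subtype.val (Subgroup.mem_center_iff.mp hz ⟨_, hc⟩)).symm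
  have hconj : g * z * g⁻¹ = ⁅g, (z : G)⁆ * z := by
    rw [commutatorElement_def]
    group
  rw [hconj]
  exact hzc.mul_right (Commute.refl _)

theorem DivisionRing.mem_center_of_mem_center_commutator {D : Type*} [DivisionRing D]
    {z : commutator Dˣ} (hz : z ∈ Subgroup.center (commutator Dˣ)) :
    ((z : Dˣ) : D) ∈ Subring.center D := by
  refine Subring.mem_center_of_forall_commute_conj fun x => ?_
  rcases eq_or_ne x 0 with rfl | hx
  · simp
  simpa using (commute_conj_of_mem_center_commutator hz (Units.mk0 x hx)).units_val

theorem Matrix.isOfFinOrder_unit_iff_of_eq_scalar {n R : Type*} [Fintype n] [DecidableEq n]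
    [Nonempty n] [Semiring R] {A : (Matrix n n R)ˣ} {d : Rˣ}
    (hA : (A : Matrix n n R) = Matrix.scalar n (d : R)) : IsOfFinOrder A ↔ IsOfFinOrder d := by
  have hinj : Function.Injective (Matrix.scalar n : R →+* Matrix n n R).toMonoidHom :=
    fun _ _ h => Matrix.scalar_inj.mp h
  rw [show A = Units.map (Matrix.scalar n : R →+* Matrix n n R).toMonoidHom d from Units.ext hA]
  exact (Units.map_injective hinj).isOfFinOrder_iff

/-- `Z(SL_n(D)) = { dI : d ∈ F*, dⁿ ∈ D' }` is a torsion group iff `Z(D')` is a torsion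
group, where `D' = [D*, D*]`. -/
theorem stmt14 (D : Type u) [DivisionRing D] (n : ℕ) (hn : 1 ≤ n) :
    (∀ A : (Matrix (Fin n) (Fin n) D)ˣ,
        (∃ d : Dˣ, A.val = Matrix.diagonal (fun _ => (d : D)) ∧
          (d : D) ∈ Subring.center D ∧ d ^ n ∈ commutator Dˣ) → IsOfFinOrder A) ↔
      Monoid.IsTorsion (Subgroup.center ↥(commutator Dˣ)) := by
  have : Nonempty (Fin n) := ⟨⟨0, hn⟩⟩
  constructor
  · intro H z
    let A := Units.map (Matrix.scalar (Fin n) : D →+* _).toMonoidHom (z : Dˣ)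
    have hA : IsOfFinOrder A := H A
      ⟨z, rfl, DivisionRing.mem_center_of_mem_center_commutator z.2, pow_mem z.1.2 n⟩
    rw [Matrix.isOfFinOrder_unit_iff_of_eq_scalar rfl] at hA
    exact Submonoid.isOfFinOrder_coe.mp (Submonoid.isOfFinOrder_coe.mp hA)
  · rintro H A ⟨d, hA, hd, hdn⟩
    rw [Matrix.isOfFinOrder_unit_iff_of_eq_scalar hA]
    have hdZ : d ^ n ∈ Subgroup.center Dˣ := pow_mem (Set.subset_center_units hd) n
    have hdnZ : (⟨d ^ n, hdn⟩ : commutator Dˣ) ∈ Subgroup.center (commutator Dˣ) :=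
      Subgroup.mem_center_iff.mpr fun g => Subtype.ext (Subgroup.mem_center_iff.mp hdZ g)
    have hfin : IsOfFinOrder (d ^ n) :=
      Submonoid.isOfFinOrder_coe.mpr (Submonoid.isOfFinOrder_coe.mpr (H ⟨_, hdnZ⟩))
    exact (isOfFinOrder_pow.mp hfin).resolve_right (by omega)
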